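/- arXiv:2109.00710 — 2 statements merged into one kernel-verified Lean document; each statement's English description precedes it below -/
import Mathlib

section
/- Let Ω be a bounded domain, φ the positive ground state Dirichlet eigenfunction with ‖φ‖_∞ = 1 and eigenvalue λ > 0, represented by Feynman–Kac. Fix 0 < μ < η ≤ 1 and x with φ(x) = μ. Then for all τ > 0, the probability ψ̃ that Brownian motion started at x hits the set {φ ≥ η} within time τ while remaining in Ω satisfies ψ̃ ≤ (μ/η)·(1 - e^{-λτ})/λ. -/
/-!
By Feynman–Kac, the expectation of `φ(B_t)` over paths staying in `Ω` up to time `t` is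
`e^{-λt} φ(x) = e^{-λt} μ`. As `φ > 0` on `Ω`, Markov's inequality bounds the probability
that such a path has `φ(B_t) ≥ η` by `(μ/η) e^{-λt}`; integrating over `t ∈ (0, τ]` gives
the claim.
-/

open MeasureTheory Real Set

namespace MeasureTheory

variable {α β : Type*} [MeasurableSpace α] [MeasurableSpace β] {μ : Measure α} {s : Set α}

/-- Unlike `ae_restrict_of_forall_mem`, this does not need `s` to be measurable. -/
theorem AEMeasurable.ae_restrict_mem_of_forall_mem {f : α → β} {T : Set β}
    (hf : AEMeasurable f (μ.restrict s)) (hT : MeasurableSet T) (h : ∀ x ∈ s, f x ∈ T) :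
    ∀ᵐ x ∂μ.restrict s, f x ∈ T := by
  have hne : μ ({x | f x ≠ hf.mk f x} ∩ s) = 0 :=
    nonpos_iff_eq_zero.1 ((Measure.le_restrict_apply _ _).trans (ae_iff.1 hf.ae_eq_mk).le)
  have hmk : ∀ᵐ x ∂μ.restrict s, hf.mk f x ∈ T := by
    rw [ae_iff]
    refine (Measure.restrict_apply (hf.measurable_mk hT.compl)).trans ?_
    refine measure_mono_null (fun x ⟨hx, hxs⟩ => ?_) hne
    exact ⟨fun hfx => hx (hfx ▸ h x hxs), hxs⟩
  filter_upwards [hf.ae_eq_mk, hmk] with x hx hmx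
  rwa [hx]

theorem mul_measureReal_inter_le_setIntegral {f : α → ℝ} (hint : IntegrableOn f s μ)
    (hf : ∀ x ∈ s, 0 ≤ f x) {ε : ℝ} (hε : 0 < ε) :
    ε * μ.real ({x | ε ≤ f x} ∩ s) ≤ ∫ x in s, f x ∂μ :=
  calc ε * μ.real ({x | ε ≤ f x} ∩ s) ≤ ε * (μ.restrict s).real {x | ε ≤ f x} := by
        gcongr
        exact ENNReal.toReal_mono (hint.measure_ge_lt_top hε).ne (Measure.le_restrict_apply _ _)
    _ ≤ ∫ x in s, f x ∂μ :=
        mul_meas_ge_le_integral_of_nonneg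
          (hint.aemeasurable.ae_restrict_mem_of_forall_mem measurableSet_Ici hf) hint ε

end MeasureTheory

theorem integral_exp_neg_mul {c : ℝ} (hc : c ≠ 0) (a b : ℝ) :
    ∫ t in a..b, exp (-c * t) = (exp (-c * a) - exp (-c * b)) / c := by
  rw [intervalIntegral.integral_comp_mul_left (fun t => exp t) (neg_ne_zero.2 hc), integral_exp]
  simp only [smul_eq_mul]
  field_simp
  ring_nf

theorem stmt_6_general {n : ℕ}
    (Ω : Set (EuclideanSpace ℝ (Fin n)))
    (φ : EuclideanSpace ℝ (Fin n) → ℝ) (lam : ℝ) (hlam : 0 < lam)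
    (hφpos : ∀ y ∈ Ω, 0 < φ y)
    {W : Type*} [MeasurableSpace W]
    (P : EuclideanSpace ℝ (Fin n) → Measure W)
    (traj : W → ℝ → EuclideanSpace ℝ (Fin n))
    (hFK : ∀ x ∈ Ω, ∀ t : ℝ, 0 < t →
      Real.exp (-lam * t) * φ x
        = ∫ w in {w | ∀ s ∈ Set.Icc (0:ℝ) t, traj w s ∈ Ω}, φ (traj w t) ∂(P x))
    (μ' η : ℝ) (hμη : 0 < μ') (hμltη : μ' < η)
    (x : EuclideanSpace ℝ (Fin n)) (hx : x ∈ Ω) (hφx : φ x = μ')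
    (ψt : ℝ → ℝ)
    (hψt : ∀ τ : ℝ, 0 < τ → ψt τ ≤
      ∫ t in (0:ℝ)..τ,
        ((P x) {w | φ (traj w t) ∈ Set.Ici η ∧
          ∀ s ∈ Set.Icc (0:ℝ) t, traj w s ∈ Ω}).toReal) :
    ∀ τ : ℝ, 0 < τ → ψt τ ≤ (μ' / η) * ((1 - Real.exp (-lam * τ)) / lam) := by
  intro τ hτ
  have hη : 0 < η := hμη.trans hμltη
  have hdecay : ∀ t ∈ Ioc 0 τ, ((P x) {w | φ (traj w t) ∈ Set.Ici η ∧
      ∀ s ∈ Set.Icc (0:ℝ) t, traj w s ∈ Ω}).toReal ≤ μ' / η * exp (-lam * t) := by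
    rintro t ⟨ht, -⟩
    have hFKt : exp (-lam * t) * μ' = _ := hφx ▸ hFK x hx t ht
    have hint :
        IntegrableOn (fun w => φ (traj w t)) {w | ∀ s ∈ Icc 0 t, traj w s ∈ Ω} (P x) :=
      .of_integral_ne_zero (hFKt ▸ by positivity)
    have hmarkov := mul_measureReal_inter_le_setIntegral hint
      (fun w hw => (hφpos _ (hw t ⟨ht.le, le_rfl⟩)).le) hη
    rw [div_mul_eq_mul_div, le_div_iff₀ hη, mul_comm μ', mul_comm _ η, hFKt]
    exact hmarkov
  calc ψt τ ≤ _ := hψt τ hτ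
    _ ≤ ∫ t in (0:ℝ)..τ, μ' / η * exp (-lam * t) := by
      rw [intervalIntegral.integral_of_le hτ.le, intervalIntegral.integral_of_le hτ.le]
      -- the hitting-probability integrand is not known to be measurable, but it is nonnegative
      exact integral_mono_of_nonneg (ae_of_all _ fun _ => ENNReal.toReal_nonneg)
        (by fun_prop : Continuous _).integrableOn_Ioc
        (ae_restrict_of_forall_mem measurableSet_Ioc hdecay)
    _ = μ' / η * ((1 - exp (-lam * τ)) / lam) := by
      rw [intervalIntegral.integral_const_mul, integral_exp_neg_mul hlam.ne', mul_zero, exp_zero]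

/-- Let `φ` be the positive ground state Dirichlet eigenfunction of a
bounded domain `Ω`, with `‖φ‖_{L^∞(Ω)} = 1` (i.e. `0 < φ ≤ 1` on `Ω`) and eigenvalue
`λ > 0`, represented via Feynman–Kac.  Fix `0 < μ < η ≤ 1` and `x ∈ Ω` with `φ(x) = μ`.
Then for all `τ > 0`, the probability `ψ̃(τ,x)` that Brownian motion started at `x`
hits `{φ ≥ η}` within time `τ` while remaining in `Ω`, which satisfies
`ψ̃(τ,x) ≤ ∫₀^τ P_x(ω(t) ∈ {φ ≥ η} and ω([0,t]) ⊆ Ω) dt`, obeys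
`ψ̃(τ,x) ≤ (μ/η)·(1 - e^{-λτ})/λ`. -/
theorem stmt_6 {n : ℕ}
    (Ω : Set (EuclideanSpace ℝ (Fin n))) (hΩbdd : Bornology.IsBounded Ω)
    (φ : EuclideanSpace ℝ (Fin n) → ℝ) (lam : ℝ) (hlam : 0 < lam)
    (hφpos : ∀ y ∈ Ω, 0 < φ y) (hφle : ∀ y ∈ Ω, φ y ≤ 1)
    {W : Type*} [MeasurableSpace W]
    (P : EuclideanSpace ℝ (Fin n) → Measure W) (hP : ∀ x, IsProbabilityMeasure (P x))
    (traj : W → ℝ → EuclideanSpace ℝ (Fin n))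
    (hstart : ∀ x, ∀ᵐ w ∂(P x), traj w 0 = x)
    (hFK : ∀ x ∈ Ω, ∀ t : ℝ, 0 < t →
      Real.exp (-lam * t) * φ x
        = ∫ w in {w | ∀ s ∈ Set.Icc (0:ℝ) t, traj w s ∈ Ω}, φ (traj w t) ∂(P x))
    (μ' η : ℝ) (hμη : 0 < μ') (hμltη : μ' < η) (hη : η ≤ 1)
    (x : EuclideanSpace ℝ (Fin n)) (hx : x ∈ Ω) (hφx : φ x = μ')
    (ψt : ℝ → ℝ)
    (hψt : ∀ τ : ℝ, 0 < τ → ψt τ ≤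
      ∫ t in (0:ℝ)..τ,
        ((P x) {w | φ (traj w t) ∈ Set.Ici η ∧
          ∀ s ∈ Set.Icc (0:ℝ) t, traj w s ∈ Ω}).toReal)
    (hψtnonneg : ∀ τ, 0 ≤ ψt τ) :
    ∀ τ : ℝ, 0 < τ → ψt τ ≤ (μ' / η) * ((1 - Real.exp (-lam * τ)) / lam) :=
  stmt_6_general Ω φ lam hlam hφpos P traj hFK μ' η hμη hμltη x hx hφx ψt hψt
end

section
/- For every ε > 0 and every n ≥ 1 there exists c₀ > 0 such that for all c ≥ c₀ and all t > 0, if r² = c·t then (1/Γ(n/2)) ∫₀ᵗ Γ(n/2, r²/(4s)) ds ≤ ((1+ε)/Γ(n/2)) · c^{n/2 - 1} · t · e^{-r²/(4t)}, where Γ(s,x) = ∫_x^∞ e^{-u} u^{s-1} du is the upper incomplete Gamma function. -/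
/-!
Past `2(a-1)` the function `u ↦ u^{a-1} e^{-u/2}` decreases, so for `x ≥ x₀ ≥ 2(a-1)` the tail
`Γ(a,x)` is at most `2 x₀^{a-1} e^{-x₀/2} e^{-x/2}`. Write `x = r²/(4t) = c/4`, so the integrand is
`Γ(a, x t/s)`. For `0 < s ≤ t` the inequality `t/s ≥ 2 - s/t` turns `e^{-x t/(2s)}` into
`e^{-x} e^{x s/(2t)}`, and integrating the latter over `[0, t]` gains a factor `1/x`:
`∫₀ᵗ Γ(a, x t/s) ds ≤ 4 x^{a-2} t e^{-x}`. The claimed bound is of order `x^{a-1} t e^{-x}`, so once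
`c` is large the spare factor `1/x` absorbs every constant.
-/

open MeasureTheory Real intervalIntegral

/-- The upper incomplete Gamma function `Γ(s,x) = ∫_x^∞ e^{-u} u^{s-1} du`. -/
noncomputable def upperIncGamma (s x : ℝ) : ℝ :=
  ∫ u in Set.Ioi x, Real.exp (-u) * u ^ (s - 1)

open Set

lemma rpow_mul_exp_neg_mul_le {b k x u : ℝ} (hk : 0 ≤ k) (hx : 0 < x) (hbx : b ≤ k * x)
    (hxu : x ≤ u) : u ^ b * exp (-(k * u)) ≤ x ^ b * exp (-(k * x)) := by
  have hu : 0 < u := hx.trans_le hxu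
  have key : b * (log u - log x) ≤ k * (u - x) := by
    rcases le_or_gt b 0 with hb | hb
    · nlinarith [log_le_log hx hxu]
    · have hlog : log u - log x ≤ (u - x) / x := by
        rw [← log_div hu.ne' hx.ne', sub_div, div_self hx.ne']
        exact log_le_sub_one_of_pos (div_pos hu hx)
      calc b * (log u - log x) ≤ b * ((u - x) / x) := by gcongr
        _ ≤ k * x * ((u - x) / x) := by gcongr
        _ = k * (u - x) := by field_simp
  rw [rpow_def_of_pos hu, rpow_def_of_pos hx, ← exp_add, ← exp_add, exp_le_exp]
  linarith

lemma upperIncGamma_nonneg (a : ℝ) {x : ℝ} (hx : 0 ≤ x) : 0 ≤ upperIncGamma a x :=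
  setIntegral_nonneg measurableSet_Ioi fun u hu => by
    have : 0 ≤ u := hx.trans (le_of_lt hu)
    positivity

lemma upperIncGamma_le_mul_exp_neg_half {a x₀ x : ℝ} (hx₀ : 0 < x₀) (ha : 2 * (a - 1) ≤ x₀)
    (hx : x₀ ≤ x) :
    upperIncGamma a x ≤ 2 * x₀ ^ (a - 1) * exp (-(x₀ / 2)) * exp (-(x / 2)) := by
  have hexp : ∀ u, exp (-(u / 2)) = exp (-(1 / 2) * u) := fun u => by ring_nf
  have hint : IntegrableOn (fun u => exp (-(u / 2))) (Ioi x) := by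
    simp_rw [hexp]; exact integrableOn_exp_mul_Ioi (by norm_num) x
  calc upperIncGamma a x
      ≤ ∫ u in Ioi x, x₀ ^ (a - 1) * exp (-(x₀ / 2)) * exp (-(u / 2)) := by
        refine setIntegral_mono_of_nonneg (fun u hu => ?_) (fun u hu => ?_) (hint.const_mul _)
        · have : 0 ≤ u := hx₀.le.trans (hx.trans hu.le)
          positivity
        · have hdecay := rpow_mul_exp_neg_mul_le (b := a - 1) (k := 1 / 2) (by norm_num) hx₀
            (by linarith) (hx.trans hu.le)
          calc exp (-u) * u ^ (a - 1) = u ^ (a - 1) * exp (-(1 / 2 * u)) * exp (-(u / 2)) := by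
                rw [mul_assoc, ← exp_add]; ring_nf
            _ ≤ x₀ ^ (a - 1) * exp (-(1 / 2 * x₀)) * exp (-(u / 2)) :=
                mul_le_mul_of_nonneg_right hdecay (exp_nonneg _)
            _ = x₀ ^ (a - 1) * exp (-(x₀ / 2)) * exp (-(u / 2)) := by ring_nf
    _ = 2 * x₀ ^ (a - 1) * exp (-(x₀ / 2)) * exp (-(x / 2)) := by
        rw [MeasureTheory.integral_const_mul]; simp_rw [hexp]
        rw [integral_exp_mul_Ioi (by norm_num)]; ring_nf

lemma integral_upperIncGamma_div_le {a x t : ℝ} (hx : 0 < x) (ha : 2 * (a - 1) ≤ x)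
    (ht : 0 < t) :
    ∫ s in (0:ℝ)..t, upperIncGamma a (x * t / s) ≤ 4 * x ^ (a - 2) * t * exp (-x) := by
  set C := 2 * x ^ (a - 1) * exp (-(x / 2)) * exp (-x)
  have hpt : ∀ s ∈ Ioc 0 t, upperIncGamma a (x * t / s) ≤ C * exp (x / (2 * t) * s) := by
    rintro s ⟨hs, hst⟩
    have hxs : x ≤ x * t / s := by rw [le_div_iff₀ hs]; gcongr
    have hamgm : exp (-(x * t / s / 2)) ≤ exp (-x) * exp (x / (2 * t) * s) := by
      rw [← exp_add, exp_le_exp]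
      have : 0 ≤ x * (t - s) ^ 2 / (2 * s * t) := by positivity
      have : x * (t - s) ^ 2 / (2 * s * t) = x * t / s / 2 - x + x / (2 * t) * s := by
        field_simp; ring
      linarith
    calc upperIncGamma a (x * t / s)
        ≤ 2 * x ^ (a - 1) * exp (-(x / 2)) * exp (-(x * t / s / 2)) :=
          upperIncGamma_le_mul_exp_neg_half hx ha hxs
      _ ≤ 2 * x ^ (a - 1) * exp (-(x / 2)) * (exp (-x) * exp (x / (2 * t) * s)) := by gcongr
      _ = C * exp (x / (2 * t) * s) := by ring
  have hexp_int : ∫ s in (0:ℝ)..t, exp (x / (2 * t) * s) ≤ 2 * t / x * exp (x / 2) := by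
    rw [integral_comp_mul_left exp (by positivity), integral_exp, mul_zero, exp_zero, smul_eq_mul,
      show x / (2 * t) * t = x / 2 by field_simp, inv_div]
    gcongr; linarith
  rw [integral_of_le ht.le]
  calc ∫ s in Ioc 0 t, upperIncGamma a (x * t / s)
      ≤ ∫ s in Ioc 0 t, C * exp (x / (2 * t) * s) :=
        setIntegral_mono_of_nonneg (fun s hs => upperIncGamma_nonneg a (by have := hs.1; positivity))
          hpt (by fun_prop : Continuous fun s => C * exp (x / (2 * t) * s)).integrableOn_Ioc
    _ = C * ∫ s in (0:ℝ)..t, exp (x / (2 * t) * s) := by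
        rw [MeasureTheory.integral_const_mul, integral_of_le ht.le]
    _ ≤ C * (2 * t / x * exp (x / 2)) := by gcongr
    _ = 4 * x ^ (a - 2) * t * exp (-x) := by
        rw [show a - 2 = a - 1 - 1 by ring, rpow_sub_one hx.ne']
        have hcancel : exp (-(x / 2)) * exp (x / 2) = 1 := by rw [← exp_add]; simp
        calc C * (2 * t / x * exp (x / 2))
            = 4 * (x ^ (a - 1) / x) * t * exp (-x) * (exp (-(x / 2)) * exp (x / 2)) := by ring
          _ = 4 * (x ^ (a - 1) / x) * t * exp (-x) := by rw [hcancel, mul_one]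

lemma four_mul_div_four_rpow_sub_two_le {a c : ℝ} (ha : 0 ≤ a) (hc : 64 ≤ c) :
    4 * (c / 4) ^ (a - 2) ≤ c ^ (a - 1) := by
  have hc0 : 0 < c := by linarith
  have h4 : (4:ℝ)⁻¹ ≤ 4 ^ (a - 1) := by
    rw [← rpow_neg_one]; exact rpow_le_rpow_of_exponent_le (by norm_num) (by linarith)
  rw [show a - 2 = a - 1 - 1 by ring, rpow_sub_one (by positivity), div_rpow hc0.le (by norm_num)]
  have hc_pow : 0 ≤ c ^ (a - 1) := by positivity
  have h1 : c ^ (a - 1) / 4 ^ (a - 1) ≤ 4 * c ^ (a - 1) := by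
    rw [div_le_iff₀ (by positivity)]; nlinarith
  calc 4 * (c ^ (a - 1) / 4 ^ (a - 1) / (c / 4)) ≤ 4 * (4 * c ^ (a - 1) / (c / 4)) := by gcongr
    _ = 64 / c * c ^ (a - 1) := by ring
    _ ≤ 1 * c ^ (a - 1) := by gcongr; rwa [div_le_one hc0]
    _ = c ^ (a - 1) := one_mul _

theorem stmt_12_general (ε : ℝ) (hε : 0 < ε) (n : ℕ) :
    ∃ c₀ > (0:ℝ), ∀ c : ℝ, c₀ ≤ c → ∀ t r : ℝ, 0 < t → r ^ 2 = c * t →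
      (1 / Real.Gamma ((n : ℝ) / 2))
          * ∫ s in (0:ℝ)..t, upperIncGamma ((n : ℝ) / 2) (r ^ 2 / (4 * s))
        ≤ ((1 + ε) / Real.Gamma ((n : ℝ) / 2)) * c ^ ((n : ℝ) / 2 - 1) * t
          * Real.exp (-r ^ 2 / (4 * t)) := by
  set a : ℝ := (n : ℝ) / 2
  have ha : 0 ≤ a := by positivity
  refine ⟨max 64 (8 * a), by positivity, fun c hc t r ht hr => ?_⟩
  have hc64 : 64 ≤ c := le_of_max_le_left hc
  have hca : 8 * a ≤ c := le_of_max_le_right hc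
  have hc0 : 0 < c := by linarith
  have hx : ∀ s, r ^ 2 / (4 * s) = c / 4 * t / s := fun s => by rw [hr]; ring
  have hexp : -r ^ 2 / (4 * t) = -(c / 4) := by rw [hr]; field_simp
  have hΓ : 0 ≤ 1 / Gamma a := one_div_nonneg.2 (Gamma_nonneg_of_nonneg ha)
  simp_rw [hx, hexp]
  calc 1 / Gamma a * ∫ s in (0:ℝ)..t, upperIncGamma a (c / 4 * t / s)
      ≤ 1 / Gamma a * (4 * (c / 4) ^ (a - 2) * t * exp (-(c / 4))) := by
        gcongr; exact integral_upperIncGamma_div_le (by positivity) (by linarith) ht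
    _ ≤ 1 / Gamma a * ((1 + ε) * c ^ (a - 1) * t * exp (-(c / 4))) := by
        gcongr 1 / Gamma a * (?_ * t * exp (-(c / 4)))
        calc 4 * (c / 4) ^ (a - 2) ≤ c ^ (a - 1) := four_mul_div_four_rpow_sub_two_le ha hc64
          _ ≤ (1 + ε) * c ^ (a - 1) := le_mul_of_one_le_left (by positivity) (by linarith)
    _ = (1 + ε) / Gamma a * c ^ (a - 1) * t * exp (-(c / 4)) := by ring

/-- For every `ε > 0` and every `n ≥ 1` there exists `c₀ > 0` such that
for all `c ≥ c₀`, `t > 0` and `r` with `r² = c·t`,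
`(1/Γ(n/2)) ∫₀ᵗ Γ(n/2, r²/(4s)) ds ≤ ((1+ε)/Γ(n/2)) · c^{n/2-1} · t · e^{-r²/(4t)}`. -/
theorem stmt_12 (ε : ℝ) (hε : 0 < ε) (n : ℕ) (hn : 1 ≤ n) :
    ∃ c₀ > (0:ℝ), ∀ c : ℝ, c₀ ≤ c → ∀ t r : ℝ, 0 < t → r ^ 2 = c * t →
      (1 / Real.Gamma ((n : ℝ) / 2))
          * ∫ s in (0:ℝ)..t, upperIncGamma ((n : ℝ) / 2) (r ^ 2 / (4 * s))
        ≤ ((1 + ε) / Real.Gamma ((n : ℝ) / 2)) * c ^ ((n : ℝ) / 2 - 1) * t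
          * Real.exp (-r ^ 2 / (4 * t)) :=
  stmt_12_general ε hε n
end
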